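/- arXiv:1907.04016 — 9 statements merged into one kernel-verified Lean document; each statement's English description precedes it below -/
import Mathlib

section
/- For every integer i ≥ 1, the generating series of walks with steps in {−1,+1} from 0 to i satisfies P^{(i)}(t) = B·(1+U)^i·t^{⌊i/2⌋} in ℚ[[t]]. -/
open PowerSeries

/-- `walkCount n i` is the number of sequences `(s_1, …, s_n) ∈ {−1,+1}^n`
with `s_1 + ⋯ + s_n = i`. -/
def walkCount (n : ℕ) (i : ℤ) : ℕ :=
  (Finset.univ.filter
    (fun s : Fin n → Bool => (∑ k, (if s k then (1 : ℤ) else -1)) = i)).card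

/-- `P i = Σ_{n ≥ 0} p_{n,i} t^{⌊n/2⌋}`: the coefficient of `t^m` picks up the
contributions of `n = 2m` and `n = 2m+1` (at most one of each parity is nonzero). -/
noncomputable def P (i : ℤ) : PowerSeries ℚ :=
  PowerSeries.mk fun m => ((walkCount (2 * m) i + walkCount (2 * m + 1) i : ℕ) : ℚ)

/-- The sum of `±1` steps equals twice the number of `+1` steps minus `n`. -/
lemma sum_pm (n : ℕ) (s : Fin n → Bool) :
    (∑ k, (if s k then (1 : ℤ) else -1)) =
      2 * ((Finset.univ.filter (fun k => s k = true)).card : ℤ) - n := by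
  have h1 : (∑ k, (if s k then (1 : ℤ) else -1)) =
      ∑ k : Fin n, (2 * (if s k = true then (1:ℤ) else 0) - 1) := by
    apply Finset.sum_congr rfl
    intro k _
    by_cases h : s k <;> simp [h]
  rw [h1, Finset.sum_sub_distrib, ← Finset.mul_sum, Finset.sum_boole, Finset.sum_const,
    Finset.card_univ, Fintype.card_fin]
  simp

/-- Walks are in bijection with subsets (the positions of the `+1` steps). -/
lemma walkCount_eq_card (n : ℕ) (i : ℤ) :
    walkCount n i =
      (Finset.univ.filter (fun F : Finset (Fin n) => 2*(F.card:ℤ) = n + i)).card := by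
  unfold walkCount
  apply Finset.card_nbij (fun s => Finset.univ.filter (fun k => s k = true))
  · intro s hs
    simp only [Finset.mem_coe, Finset.mem_filter, Finset.mem_univ, true_and] at hs ⊢
    rw [sum_pm] at hs
    linarith
  · intro s _ s' _ h
    simp only at h
    funext k
    have := Finset.ext_iff.mp h k
    simpa using this
  · intro F hF
    refine ⟨fun k => k ∈ F, ?_, ?_⟩
    · simp only [Finset.mem_coe, Finset.mem_filter, Finset.mem_univ, true_and]
      rw [sum_pm]
      simp only [Finset.coe_filter, Finset.mem_univ, true_and, Set.mem_setOf_eq] at hF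
      have : (Finset.univ.filter (fun k : Fin n => decide (k ∈ F) = true)) = F := by
        ext k; simp
      rw [this]
      linarith
    · ext k; simp

lemma walkCount_eq_choose (n t : ℕ) (i : ℤ) (ht : 2*(t:ℤ) = n + i) :
    walkCount n i = n.choose t := by
  rw [walkCount_eq_card]
  have h1 : (Finset.univ.filter (fun F : Finset (Fin n) => 2*(F.card:ℤ) = n + i)) =
      Finset.powersetCard t Finset.univ := by
    ext F
    simp only [Finset.mem_filter, Finset.mem_univ, true_and,
      Finset.mem_powersetCard_univ]
    constructor
    · intro h
      have : (F.card : ℤ) = t := by linarith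
      exact_mod_cast this
    · intro h; rw [h]; exact ht
  rw [h1, Finset.card_powersetCard, Finset.card_univ, Fintype.card_fin]

lemma walkCount_eq_zero (n : ℕ) (i : ℤ) (h : ∀ t : ℕ, 2*(t:ℤ) ≠ n + i) :
    walkCount n i = 0 := by
  rw [walkCount_eq_card, Finset.card_eq_zero, Finset.filter_eq_empty_iff]
  intro F _
  exact h F.card

/-- The series `Σ_n C(2n+k, n) tⁿ`. -/
noncomputable def Aser : ℕ → PowerSeries ℚ := fun k =>
  PowerSeries.mk fun n => ((2*n+k).choose n : ℚ)

lemma Aser_rec (k : ℕ) : Aser (k+1) = Aser k + X * Aser (k+2) := by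
  ext n
  rw [map_add]
  cases n with
  | zero => simp [Aser]
  | succ n =>
    rw [PowerSeries.coeff_succ_X_mul]
    simp only [Aser, PowerSeries.coeff_mk]
    have hnat : (2*(n+1)+(k+1)).choose (n+1)
        = (2*(n+1)+k).choose (n+1) + (2*n+(k+2)).choose n := by
      rw [show 2*(n+1)+(k+1) = (2*n+(k+2))+1 from by ring, Nat.choose_succ_succ,
        show 2*(n+1)+k = 2*n+(k+2) from by ring]
      exact Nat.add_comm _ _
    exact_mod_cast hnat

lemma Aser_zero : Aser 0 = 1 + 2*(X * Aser 1) := by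
  ext n
  rw [map_add]
  cases n with
  | zero => simp [Aser]
  | succ n =>
    rw [two_mul, map_add, PowerSeries.coeff_succ_X_mul]
    simp only [Aser, PowerSeries.coeff_mk, PowerSeries.coeff_one, Nat.succ_ne_zero,
      if_false]
    have hs : (2*n+1).choose (n+1) = (2*n+1).choose n := by
      rw [← Nat.choose_symm (by omega : n+1 ≤ 2*n+1)]
      congr 1
      omega
    have hnat : (2*(n+1)+0).choose (n+1) = (2*n+1).choose n + (2*n+1).choose n := by
      rw [show 2*(n+1)+0 = (2*n+1)+1 from by ring, Nat.choose_succ_succ, hs]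
    push_cast [hnat]
    ring

lemma P_eq_Aser (i : ℕ) : P (i : ℤ) = Aser i * X ^ (i / 2) := by
  ext m
  rw [PowerSeries.coeff_mul_X_pow']
  simp only [P, Aser, PowerSeries.coeff_mk]
  rcases Nat.even_or_odd i with ⟨j, hj⟩ | ⟨j, hj⟩
  · -- i = j + j
    have hd : i / 2 = j := by omega
    have h1 : walkCount (2*m+1) (i : ℤ) = 0 := by
      apply walkCount_eq_zero
      intro t ht
      have : i = j + j := hj
      push_cast [this] at ht
      omega
    have h0 : walkCount (2*m) (i : ℤ) = (2*m).choose (m+j) := by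
      apply walkCount_eq_choose
      have : i = j + j := hj
      push_cast [this]
      ring
    rw [h0, h1, hd]
    by_cases hjm : j ≤ m
    · rw [if_pos hjm]
      have e1 : 2*(m-j)+i = 2*m := by omega
      have e2 : (2*m).choose (m+j) = (2*m).choose (m-j) := by
        rw [← Nat.choose_symm (by omega : m+j ≤ 2*m)]
        congr 1
        omega
      rw [e1, e2]
      push_cast
      ring
    · rw [if_neg hjm]
      have : (2*m).choose (m+j) = 0 := Nat.choose_eq_zero_of_lt (by omega)
      rw [this]
      push_cast
      ring
  · -- i = 2*j + 1
    have hd : i / 2 = j := by omega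
    have h1 : walkCount (2*m) (i : ℤ) = 0 := by
      apply walkCount_eq_zero
      intro t ht
      have : i = 2*j + 1 := hj
      push_cast [this] at ht
      omega
    have h0 : walkCount (2*m+1) (i : ℤ) = (2*m+1).choose (m+j+1) := by
      apply walkCount_eq_choose
      have : i = 2*j + 1 := hj
      push_cast [this]
      ring
    rw [h0, h1, hd]
    by_cases hjm : j ≤ m
    · rw [if_pos hjm]
      have e1 : 2*(m-j)+i = 2*m+1 := by omega
      have e2 : (2*m+1).choose (m+j+1) = (2*m+1).choose (m-j) := by
        rw [← Nat.choose_symm (by omega : m+j+1 ≤ 2*m+1)]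
        congr 1
        omega
      rw [e1, e2]
      push_cast
      ring
    · rw [if_neg hjm]
      have : (2*m+1).choose (m+j+1) = 0 := Nat.choose_eq_zero_of_lt (by omega)
      rw [this]
      push_cast
      ring

/-- For every integer `i ≥ 1`, with `U` the unique series with zero constant coefficient
satisfying `U = t(1+U)²` and `B = (1+U)(1−U)⁻¹`, one has
`P⁽ⁱ⁾(t) = B·(1+U)^i·t^{⌊i/2⌋}` in `ℚ[[t]]`. -/
theorem P_i_eq_B_mul_pow :
    ∀ U : PowerSeries ℚ,
      PowerSeries.constantCoeff U = 0 → U = PowerSeries.X * (1 + U) ^ 2 →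
      ∀ i : ℕ, 1 ≤ i →
        P (i : ℤ) =
          ((1 + U) * (1 - U)⁻¹) * (1 + U) ^ i * PowerSeries.X ^ (i / 2) := by
  intro U hU0 hU i _
  set B : PowerSeries ℚ := (1+U) * (1-U)⁻¹ with hBdef
  have h1U0 : constantCoeff (1-U) ≠ 0 := by
    simp [hU0]
  have hInv : (1-U)⁻¹ * (1-U) = 1 := PowerSeries.inv_mul_cancel _ h1U0
  have hB : B * (1-U) = 1 + U := by
    rw [hBdef, mul_assoc, hInv, mul_one]
  have h1U : (1 - U : PowerSeries ℚ) ≠ 0 := by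
    intro h
    rw [h] at h1U0
    simp at h1U0
  have hB2 : B = 1 + 2*(X*(B*(1+U))) := by
    have h0 : (B - (1 + 2*(X*(B*(1+U))))) * (1-U) = 0 := by
      linear_combination (1 - 2*X*(1+U))*hB + 2*hU
    rcases mul_eq_zero.mp h0 with h | h
    · exact sub_eq_zero.mp h
    · exact absurd h h1U
  have hT : ∀ k, B*(1+U)^(k+1) = B*(1+U)^k + X*(B*(1+U)^(k+2)) := by
    intro k
    rw [pow_succ, pow_succ, pow_succ]
    linear_combination (B*(1+U)^k) * hU
  have key : ∀ n k, (coeff n) (Aser k) = (coeff n) (B * (1+U)^k) := by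
    intro n
    induction n using Nat.strong_induction_on with
    | _ n IH =>
      have hz : ∀ j, (coeff n) (X * Aser j) = (coeff n) (X * (B*(1+U)^j)) := by
        intro j
        cases n with
        | zero => rw [coeff_zero_X_mul, coeff_zero_X_mul]
        | succ m =>
          rw [coeff_succ_X_mul, coeff_succ_X_mul]
          exact IH m (Nat.lt_succ_self m) j
      have h0 : (coeff n) (Aser 0) = (coeff n) (B*(1+U)^0) := by
        rw [pow_zero, mul_one, Aser_zero]
        conv_rhs => rw [hB2]
        have e1 : (X : PowerSeries ℚ) * (B*(1+U)) = X*(B*(1+U)^1) := by rw [pow_one]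
        rw [e1, map_add, map_add, two_mul, two_mul, map_add, map_add, hz 1]
      have step : ∀ k,
          (coeff n) (Aser k) - (coeff n) (B*(1+U)^k) = 0 := by
        intro k
        induction k with
        | zero => rw [pow_zero, mul_one] at h0 ⊢; rw [h0]; ring
        | succ k ihk =>
          rw [Aser_rec k, hT k, map_add, map_add, hz (k+2)]
          linarith [ihk]
      intro k
      have := step k
      linarith
  have hAi : Aser i = B * (1+U)^i := by
    ext n
    exact key n i
  rw [P_eq_Aser, hAi]
end

section
/- In ℚ[[t]] one has the identity 2·B³·(1+U)³·(1−U³)^{−1} = 2·(1−t)^{−1}·(1−4t)^{−2}; equivalently, (1+U)⁶·(1−t)·(1−4t)² = (1−U)⁴·(1+U+U²). -/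
open PowerSeries

/-- With `U` the unique series in `ℚ[[t]]` with zero constant coefficient satisfying
`U = t(1+U)²`, and `B = (1+U)(1−U)⁻¹`, one has
`2·B³·(1+U)³·(1−U³)⁻¹ = 2·(1−t)⁻¹·(1−4t)⁻²`; equivalently
`(1+U)⁶·(1−t)·(1−4t)² = (1−U)⁴·(1+U+U²)`. -/
theorem rational_identity_odd_sum :
    ∀ U : PowerSeries ℚ,
      PowerSeries.constantCoeff U = 0 → U = PowerSeries.X * (1 + U) ^ 2 →
        2 * ((1 + U) * (1 - U)⁻¹) ^ 3 * (1 + U) ^ 3 * (1 - U ^ 3)⁻¹ =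
          2 * (1 - PowerSeries.X)⁻¹ * ((1 - 4 * PowerSeries.X) ^ 2)⁻¹ ∧
        (1 + U) ^ 6 * (1 - PowerSeries.X) * (1 - 4 * PowerSeries.X) ^ 2 =
          (1 - U) ^ 4 * (1 + U + U ^ 2) := by
  intro U h0 hU
  have h2 : (1 + U) ^ 6 * (1 - PowerSeries.X) * (1 - 4 * PowerSeries.X) ^ 2 =
      (1 - U) ^ 4 * (1 + U + U ^ 2) := by
    linear_combination (8 * (1 + U + U ^ 2) * (1 - U) ^ 2 + ((1 - U) ^ 2) ^ 2 +
      16 * (1 + U + U ^ 2) * (U - PowerSeries.X * (1 + U) ^ 2) +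
      8 * (1 - U) ^ 2 * (U - PowerSeries.X * (1 + U) ^ 2) +
      16 * (U - PowerSeries.X * (1 + U) ^ 2) ^ 2) * hU
  refine ⟨?_, h2⟩
  have c1 : constantCoeff (1 - U) ≠ 0 := by simp [h0]
  have c3 : constantCoeff (1 - U ^ 3) ≠ 0 := by simp [h0]
  have cX : constantCoeff (1 - PowerSeries.X : ℚ⟦X⟧) ≠ 0 := by simp
  have c4 : constantCoeff ((1 - 4 * PowerSeries.X) ^ 2 : ℚ⟦X⟧) ≠ 0 := by simp
  have e1 := PowerSeries.inv_mul_cancel _ c1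
  have e3 := PowerSeries.inv_mul_cancel _ c3
  have eX := PowerSeries.inv_mul_cancel _ cX
  have e4 := PowerSeries.inv_mul_cancel _ c4
  have hmc : constantCoeff ((1 - U) ^ 3 * (1 - U ^ 3) * (1 - PowerSeries.X) *
      (1 - 4 * PowerSeries.X) ^ 2) ≠ 0 := by simp [h0]
  have hm : ((1 - U) ^ 3 * (1 - U ^ 3) * (1 - PowerSeries.X) *
      (1 - 4 * PowerSeries.X) ^ 2 : ℚ⟦X⟧) ≠ 0 := fun h => hmc (by rw [h]; simp)
  apply mul_right_cancel₀ hm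
  calc 2 * ((1 + U) * (1 - U)⁻¹) ^ 3 * (1 + U) ^ 3 * (1 - U ^ 3)⁻¹ *
        ((1 - U) ^ 3 * (1 - U ^ 3) * (1 - PowerSeries.X) * (1 - 4 * PowerSeries.X) ^ 2)
      = 2 * (1 + U) ^ 6 * ((1 - U)⁻¹ * (1 - U)) ^ 3 * ((1 - U ^ 3)⁻¹ * (1 - U ^ 3)) *
        ((1 - PowerSeries.X) * (1 - 4 * PowerSeries.X) ^ 2) := by ring
    _ = 2 * ((1 + U) ^ 6 * (1 - PowerSeries.X) * (1 - 4 * PowerSeries.X) ^ 2) := by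
        rw [e1, e3]; ring
    _ = 2 * ((1 - U) ^ 4 * (1 + U + U ^ 2)) := by rw [h2]
    _ = 2 * ((1 - PowerSeries.X)⁻¹ * (1 - PowerSeries.X)) *
        (((1 - 4 * PowerSeries.X) ^ 2)⁻¹ * (1 - 4 * PowerSeries.X) ^ 2) *
        ((1 - U) ^ 3 * (1 - U ^ 3)) := by rw [eX, e4]; ring
    _ = 2 * (1 - PowerSeries.X)⁻¹ * ((1 - 4 * PowerSeries.X) ^ 2)⁻¹ *
        ((1 - U) ^ 3 * (1 - U ^ 3) * (1 - PowerSeries.X) * (1 - 4 * PowerSeries.X) ^ 2) := by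
        ring
end

section
/- The family (P^{(i)}(t)³)_{i ∈ ℤ, i even} is summable in ℚ[[t]], and Σ_{i ∈ ℤ, i even} P^{(i)}(t)³ = (1−3t)·(1−t)^{−1}·(1−4t)^{−2} in ℚ[[t]]. -/
open PowerSeries

noncomputable def Cgf : PowerSeries ℚ := PowerSeries.mk fun n => (catalan n : ℚ)

lemma Cgf_eq : Cgf = 1 + X * Cgf ^ 2 := by
  ext n
  cases n with
  | zero => simp [Cgf, catalan_zero]
  | succ n =>
    rw [map_add, coeff_succ_X_mul, sq, coeff_mul]
    simp only [Cgf, coeff_mk, coeff_one, Nat.succ_ne_zero, if_false, zero_add]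
    rw [catalan_succ' n]
    push_cast
    rfl

noncomputable def zs : PowerSeries ℚ := X * Cgf ^ 2

lemma one_add_zs : (1 : PowerSeries ℚ) + zs = Cgf := by rw [zs, ← Cgf_eq]

lemma zs_eq : zs = X * (1 + zs) ^ 2 := by rw [one_add_zs, zs]

lemma constCoeff_zs : constantCoeff zs = 0 := by simp [zs]

lemma X_dvd_zs : (X : PowerSeries ℚ) ∣ zs := ⟨Cgf ^ 2, rfl⟩

noncomputable def Bgf : PowerSeries ℚ := (1 + zs) * (1 - zs)⁻¹

lemma constCoeff_one_sub_zs : constantCoeff (1 - zs) = 1 := by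
  simp [constCoeff_zs]

lemma Bgf_mul : Bgf * (1 - zs) = 1 + zs := by
  rw [Bgf, mul_assoc, mul_comm (1 - zs)⁻¹, PowerSeries.mul_inv_cancel _ (by
    rw [constCoeff_one_sub_zs]; norm_num), mul_one]

lemma constCoeff_Bgf : constantCoeff Bgf = 1 := by
  have := congrArg (constantCoeff) Bgf_mul
  rw [map_mul, constCoeff_one_sub_zs, mul_one] at this
  simpa [constCoeff_zs] using this

lemma one_add_zs_ne : (1 + zs : PowerSeries ℚ) ≠ 0 := by
  intro h
  have := congrArg (constantCoeff) h
  simp [constCoeff_zs] at this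

lemma Bgf_eq : Bgf = 1 + 2 * X * Bgf * (1 + zs) := by
  have hc : (Bgf - (1 + 2 * X * Bgf * (1 + zs))) * (1 + zs) = 0 := by
    linear_combination Bgf_mul + 2 * Bgf * zs_eq
  rcases mul_eq_zero.mp hc with h | h
  · exact sub_eq_zero.mp h
  · exact absurd h one_add_zs_ne

noncomputable def Q (j : ℤ) : PowerSeries ℚ := Bgf * zs ^ j.natAbs

lemma Q_neg (j : ℤ) : Q (-j) = Q j := by simp [Q]

lemma Q_step (k : ℕ) :
    Bgf * zs ^ (k + 1) =
      X * (Bgf * zs ^ k + 2 * (Bgf * zs ^ (k + 1)) + Bgf * zs ^ (k + 2)) := by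
  linear_combination (Bgf * zs ^ k) * zs_eq

lemma Q_rec (j : ℤ) :
    Q j = (if j = 0 then 1 else 0) + X * (Q (j - 1) + 2 * Q j + Q (j + 1)) := by
  rcases lt_trichotomy j 0 with hj | hj | hj
  · obtain ⟨k, rfl⟩ : ∃ k : ℕ, j = -(k + 1 : ℕ) := ⟨(-(j+1)).toNat, by omega⟩
    rw [if_neg (by omega)]
    have e1 : (-(k + 1 : ℕ) - 1 : ℤ).natAbs = k + 2 := by omega
    have e2 : (-(k + 1 : ℕ) : ℤ).natAbs = k + 1 := by omega
    have e3 : (-(k + 1 : ℕ) + 1 : ℤ).natAbs = k := by omega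
    simp only [Q, e1, e2, e3, zero_add]
    linear_combination Q_step k
  · subst hj
    rw [if_pos rfl]
    have e1 : ((-1 : ℤ)).natAbs = 1 := rfl
    have e2 : ((0 : ℤ)).natAbs = 0 := rfl
    have e3 : ((1 : ℤ)).natAbs = 1 := rfl
    simp only [Q, zero_sub, zero_add, e1, e2, e3, pow_zero, pow_one, mul_one]
    linear_combination Bgf_eq
  · obtain ⟨k, rfl⟩ : ∃ k : ℕ, j = (k + 1 : ℕ) := ⟨(j-1).toNat, by omega⟩
    rw [if_neg (by omega)]
    have e1 : ((k + 1 : ℕ) - 1 : ℤ).natAbs = k := by omega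
    have e2 : (((k + 1 : ℕ) : ℤ)).natAbs = k + 1 := by omega
    have e3 : ((k + 1 : ℕ) + 1 : ℤ).natAbs = k + 2 := by omega
    simp only [Q, e1, e2, e3, zero_add]
    linear_combination Q_step k

lemma coeff_zero_Q (j : ℤ) : coeff 0 (Q j) = if j = 0 then 1 else 0 := by
  rw [coeff_zero_eq_constantCoeff, Q, map_mul, map_pow, constCoeff_Bgf, constCoeff_zs, one_mul]
  split_ifs with h
  · subst h; simp
  · rw [zero_pow (by simpa [Int.natAbs_eq_zero] using h)]


lemma walkCount_zero (i : ℤ) : walkCount 0 i = if i = 0 then 1 else 0 := by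
  unfold walkCount
  split_ifs with h
  · subst h; simp
  · rw [Finset.card_eq_zero, Finset.filter_eq_empty_iff]
    intro s _
    simpa using fun hh => h hh.symm

lemma walkCount_succ (n : ℕ) (i : ℤ) :
    walkCount (n+1) i = walkCount n (i-1) + walkCount n (i+1) := by
  classical
  unfold walkCount
  rw [Finset.card_filter, Finset.card_filter, Finset.card_filter]
  rw [← Fintype.sum_equiv (Fin.consEquiv (fun _ : Fin (n+1) => Bool))
      (fun p : Bool × (Fin n → Bool) =>
        if (∑ k, (if (Fin.cons p.1 p.2 : Fin (n+1) → Bool) k then (1:ℤ) else -1)) = i then 1 else 0)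
      (fun s : Fin (n+1) → Bool => if (∑ k, (if s k then (1:ℤ) else -1)) = i then 1 else 0)
      (fun p => rfl)]
  rw [Fintype.sum_prod_type, Fintype.sum_bool]
  have key : ∀ (b : Bool) (s : Fin n → Bool),
      (∑ k, (if (Fin.cons b s : Fin (n+1) → Bool) k then (1:ℤ) else -1)) =
        (if b then (1:ℤ) else -1) + ∑ k, (if s k then (1:ℤ) else -1) := by
    intro b s
    rw [Fin.sum_univ_succ]
    simp [Fin.cons_succ]
  congr 1
  · refine Finset.sum_congr rfl fun s _ => ?_
    rw [key]
    simp only [if_true]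
    congr 1
    exact propext ⟨fun h => by linarith, fun h => by linarith⟩
  · refine Finset.sum_congr rfl fun s _ => ?_
    rw [key]
    simp only [Bool.false_eq_true, if_false]
    congr 1
    exact propext ⟨fun h => by linarith, fun h => by linarith⟩

lemma sum_parity (n : ℕ) (s : Fin n → Bool) :
    (∑ k, (if s k then (1 : ℤ) else -1)) =
      2 * (∑ k, (if s k then (1 : ℤ) else 0)) - n := by
  have h1 : ∀ k, (if s k then (1:ℤ) else -1) = 2 * (if s k then (1:ℤ) else 0) - 1 := by
    intro k; cases s k <;> simp
  calc (∑ k, (if s k then (1 : ℤ) else -1))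
      = ∑ k, (2 * (if s k then (1:ℤ) else 0) - 1) := Finset.sum_congr rfl fun k _ => h1 k
    _ = 2 * (∑ k, (if s k then (1 : ℤ) else 0)) - n := by
        rw [Finset.sum_sub_distrib, ← Finset.mul_sum]
        simp

lemma walkCount_odd (n : ℕ) (i : ℤ) (hn : ¬ (2 : ℤ) ∣ (n + i)) : walkCount n i = 0 := by
  unfold walkCount
  rw [Finset.card_eq_zero, Finset.filter_eq_empty_iff]
  intro s _
  intro hsum
  rw [sum_parity] at hsum
  exact hn ⟨∑ k, (if s k then (1 : ℤ) else 0), by omega⟩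

lemma coeff_P (m : ℕ) (j : ℤ) : coeff m (P (2 * j)) = (walkCount (2 * m) (2 * j) : ℚ) := by
  have h0 : walkCount (2 * m + 1) (2 * j) = 0 := by
    apply walkCount_odd
    omega
  simp [P, coeff_mk, h0]

lemma P_eq_Q_coeff : ∀ (m : ℕ) (j : ℤ), coeff m (P (2 * j)) = coeff m (Q j) := by
  intro m
  induction m with
  | zero =>
    intro j
    rw [coeff_P, coeff_zero_Q, walkCount_zero]
    rcases eq_or_ne j 0 with rfl | hj
    · norm_num
    · rw [if_neg (by omega), if_neg hj]
      norm_num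
  | succ m ih =>
    intro j
    have lhs : coeff (m + 1) (P (2 * j)) =
        coeff m (P (2 * (j - 1))) + 2 * coeff m (P (2 * j)) + coeff m (P (2 * (j + 1))) := by
      rw [coeff_P, coeff_P, coeff_P, coeff_P]
      have e : 2 * (m + 1) = (2 * m + 1) + 1 := by ring
      rw [e, walkCount_succ, walkCount_succ, walkCount_succ]
      have e1 : (2 * j - 1 - 1 : ℤ) = 2 * (j - 1) := by ring
      have e2 : (2 * j - 1 + 1 : ℤ) = 2 * j := by ring
      have e3 : (2 * j + 1 - 1 : ℤ) = 2 * j := by ring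
      have e4 : (2 * j + 1 + 1 : ℤ) = 2 * (j + 1) := by ring
      rw [e1, e2, e3, e4]
      push_cast
      ring
    have rhs : coeff (m + 1) (Q j) =
        coeff m (Q (j - 1)) + 2 * coeff m (Q j) + coeff m (Q (j + 1)) := by
      conv_lhs => rw [Q_rec j]
      rw [map_add, coeff_succ_X_mul, map_add, map_add]
      have h0 : coeff (m + 1) (if j = 0 then (1 : PowerSeries ℚ) else 0) = 0 := by
        split_ifs <;> simp [coeff_one]
      rw [h0, zero_add, two_mul]
      simp only [map_add]
      ring
    rw [lhs, rhs, ih, ih, ih]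

lemma P_eq_Q (j : ℤ) : P (2 * j) = Q j := by
  ext m
  exact P_eq_Q_coeff m j

lemma hsub1 : (1 - X) * (1 + zs) ^ 2 = 1 + zs + zs ^ 2 := by linear_combination zs_eq
lemma hsub2 : (1 - 4 * X) * (1 + zs) ^ 2 = (1 - zs) ^ 2 := by linear_combination 4 * zs_eq
lemma hsub3 : (1 - 3 * X) * (1 + zs) ^ 2 = 1 - zs + zs ^ 2 := by linear_combination 3 * zs_eq

lemma bigE :
    (1 - 3 * X) * ((1 - zs) ^ 3 * (1 - zs ^ 3)) * (1 + zs) ^ 6 =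
      ((1 + zs) ^ 3 * (1 + zs ^ 3)) * ((1 - X) * (1 - 4 * X) ^ 2) * (1 + zs) ^ 6 := by
  calc (1 - 3 * X) * ((1 - zs) ^ 3 * (1 - zs ^ 3)) * (1 + zs) ^ 6
      = ((1 - 3 * X) * (1 + zs) ^ 2) * ((1 - zs) ^ 3 * (1 - zs ^ 3) * (1 + zs) ^ 4) := by ring
    _ = (1 - zs + zs ^ 2) * ((1 - zs) ^ 3 * (1 - zs ^ 3) * (1 + zs) ^ 4) := by rw [hsub3]
    _ = (1 + zs + zs ^ 2) * ((1 - zs) ^ 2) ^ 2 * ((1 + zs) ^ 3 * (1 + zs ^ 3)) := by ring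
    _ = ((1 - X) * (1 + zs) ^ 2) * (((1 - 4 * X) * (1 + zs) ^ 2) ^ 2) *
        ((1 + zs) ^ 3 * (1 + zs ^ 3)) := by rw [hsub1, hsub2]
    _ = ((1 + zs) ^ 3 * (1 + zs ^ 3)) * ((1 - X) * (1 - 4 * X) ^ 2) * (1 + zs) ^ 6 := by ring

lemma cc1 : ((1 - X : PowerSeries ℚ))⁻¹ * (1 - X) = 1 := by
  rw [mul_comm]; exact PowerSeries.mul_inv_cancel _ (by simp)
lemma cc2 : (((1 - 4 * X) ^ 2 : PowerSeries ℚ))⁻¹ * ((1 - 4 * X) ^ 2) = 1 := by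
  rw [mul_comm]; exact PowerSeries.mul_inv_cancel _ (by simp)
lemma cc3 : ((1 - zs : PowerSeries ℚ))⁻¹ * (1 - zs) = 1 := by
  rw [mul_comm]
  exact PowerSeries.mul_inv_cancel _ (by rw [constCoeff_one_sub_zs]; norm_num)
lemma constCoeff_one_sub_zs3 : constantCoeff (1 - zs ^ 3) = 1 := by
  simp [constCoeff_zs]
lemma cc4 : ((1 - zs ^ 3 : PowerSeries ℚ))⁻¹ * (1 - zs ^ 3) = 1 := by
  rw [mul_comm]
  exact PowerSeries.mul_inv_cancel _ (by rw [constCoeff_one_sub_zs3]; norm_num)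

lemma bigD_ne :
    ((1 - X) * (1 - 4 * X) ^ 2 * (1 - zs) ^ 3 * (1 - zs ^ 3) * (1 + zs) ^ 6 : PowerSeries ℚ) ≠ 0 := by
  intro h
  have := congrArg (constantCoeff) h
  simp [constCoeff_zs] at this

lemma Rid :
    (1 - 3 * X) * (1 - X)⁻¹ * ((1 - 4 * X) ^ 2)⁻¹ =
      Bgf ^ 3 * (1 + zs ^ 3) * (1 - zs ^ 3)⁻¹ := by
  apply mul_right_cancel₀ bigD_ne
  calc (1 - 3 * X) * (1 - X)⁻¹ * ((1 - 4 * X) ^ 2)⁻¹ *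
        ((1 - X) * (1 - 4 * X) ^ 2 * (1 - zs) ^ 3 * (1 - zs ^ 3) * (1 + zs) ^ 6)
      = (1 - 3 * X) * ((1 - zs) ^ 3 * (1 - zs ^ 3)) * (1 + zs) ^ 6 *
          (((1 - X)⁻¹ * (1 - X)) * (((1 - 4 * X) ^ 2)⁻¹ * ((1 - 4 * X) ^ 2))) := by ring
    _ = (1 - 3 * X) * ((1 - zs) ^ 3 * (1 - zs ^ 3)) * (1 + zs) ^ 6 := by
        rw [cc1, cc2]; ring
    _ = ((1 + zs) ^ 3 * (1 + zs ^ 3)) * ((1 - X) * (1 - 4 * X) ^ 2) * (1 + zs) ^ 6 := bigE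
    _ = ((1 + zs) ^ 3 * (1 + zs ^ 3)) * ((1 - X) * (1 - 4 * X) ^ 2) * (1 + zs) ^ 6 *
          ((((1 - zs)⁻¹ * (1 - zs)) ^ 3) * ((1 - zs ^ 3)⁻¹ * (1 - zs ^ 3))) := by
        rw [cc3, cc4]; ring
    _ = Bgf ^ 3 * (1 + zs ^ 3) * (1 - zs ^ 3)⁻¹ *
          ((1 - X) * (1 - 4 * X) ^ 2 * (1 - zs) ^ 3 * (1 - zs ^ 3) * (1 + zs) ^ 6) := by
        rw [Bgf]; ring

lemma S_eq (m : ℕ) :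
    (∑ j ∈ Finset.Icc (-(m : ℤ)) (m : ℤ), zs ^ (3 * j.natAbs)) =
      2 * (∑ k ∈ Finset.range (m + 1), (zs ^ 3) ^ k) - 1 := by
  induction m with
  | zero => simp; ring
  | succ m ih =>
    have hins : Finset.Icc (-(m + 1 : ℕ) : ℤ) ((m + 1 : ℕ) : ℤ) =
        insert (-(m + 1 : ℕ) : ℤ) (insert ((m + 1 : ℕ) : ℤ) (Finset.Icc (-(m : ℤ)) (m : ℤ))) := by
      ext x
      simp only [Finset.mem_Icc, Finset.mem_insert]
      omega
    rw [hins, Finset.sum_insert (by simp only [Finset.mem_insert, Finset.mem_Icc]; omega),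
      Finset.sum_insert (by simp only [Finset.mem_Icc]; omega), ih]
    have e1 : ((-(m + 1 : ℕ) : ℤ)).natAbs = m + 1 := by omega
    have e2 : (((m + 1 : ℕ) : ℤ)).natAbs = m + 1 := by omega
    rw [e1, e2]
    conv_rhs => rw [Finset.sum_range_succ]
    ring

lemma hS (m : ℕ) :
    (1 - zs ^ 3) * (∑ j ∈ Finset.Icc (-(m : ℤ)) (m : ℤ), zs ^ (3 * j.natAbs)) =
      1 + zs ^ 3 - 2 * (zs ^ 3) ^ (m + 1) := by
  rw [S_eq]
  have hg := geom_sum_mul (zs ^ 3) (m + 1)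
  linear_combination (-2 : PowerSeries ℚ) * hg

lemma coeff_Q_cube_vanish (m : ℕ) (j : ℤ) (h : m < 3 * j.natAbs) :
    coeff m (Q j ^ 3) = 0 := by
  have hdvd : (X : PowerSeries ℚ) ^ (3 * j.natAbs) ∣ Q j ^ 3 := by
    refine dvd_trans (pow_dvd_pow_of_dvd X_dvd_zs _) ?_
    refine Dvd.intro_left (Bgf ^ 3) ?_
    rw [Q]
    ring
  exact PowerSeries.X_pow_dvd_iff.mp hdvd m h

lemma coeff_high_vanish (m : ℕ) (f : PowerSeries ℚ) :
    coeff m (f * zs ^ (3 * (m + 1))) = 0 := by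
  have hdvd : (X : PowerSeries ℚ) ^ (m + 1) ∣ f * zs ^ (3 * (m + 1)) := by
    refine Dvd.dvd.mul_left ?_ f
    calc (X : PowerSeries ℚ) ^ (m + 1) ∣ X ^ (3 * (m + 1)) := pow_dvd_pow _ (by omega)
      _ ∣ zs ^ (3 * (m + 1)) := pow_dvd_pow_of_dvd X_dvd_zs _
  exact PowerSeries.X_pow_dvd_iff.mp hdvd m (by omega)

lemma key_coeff (m : ℕ) :
    coeff m ((1 - 3 * X) * (1 - X)⁻¹ * ((1 - 4 * X) ^ 2)⁻¹) =
      ∑ j ∈ Finset.Icc (-(m : ℤ)) (m : ℤ), coeff m (Q j ^ 3) := by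
  have hq : ∀ j : ℤ, Q j ^ 3 = Bgf ^ 3 * zs ^ (3 * j.natAbs) := by
    intro j; rw [Q]; ring
  have hsum : (∑ j ∈ Finset.Icc (-(m : ℤ)) (m : ℤ), coeff m (Q j ^ 3)) =
      coeff m (Bgf ^ 3 * ∑ j ∈ Finset.Icc (-(m : ℤ)) (m : ℤ), zs ^ (3 * j.natAbs)) := by
    rw [Finset.mul_sum, map_sum]
    exact Finset.sum_congr rfl fun j _ => by rw [hq]
  have hdiff : Bgf ^ 3 * (1 + zs ^ 3) * (1 - zs ^ 3)⁻¹ -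
      Bgf ^ 3 * (∑ j ∈ Finset.Icc (-(m : ℤ)) (m : ℤ), zs ^ (3 * j.natAbs)) =
      (2 * Bgf ^ 3 * (1 - zs ^ 3)⁻¹) * zs ^ (3 * (m + 1)) := by
    linear_combination (-(Bgf ^ 3 * (1 - zs ^ 3)⁻¹)) * hS m +
      (Bgf ^ 3 * (∑ j ∈ Finset.Icc (-(m : ℤ)) (m : ℤ), zs ^ (3 * j.natAbs))) * cc4
  have hv := coeff_high_vanish m (2 * Bgf ^ 3 * (1 - zs ^ 3)⁻¹)
  rw [Rid, hsum]
  have := congrArg (coeff m) hdiff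
  rw [map_sub, hv] at this
  linarith [this]

/-- The family `(P⁽ⁱ⁾(t)³)_{i even}` is summable (for each exponent only finitely many
members have a nonzero coefficient of that exponent), and its sum is
`(1−3t)·(1−t)⁻¹·(1−4t)⁻²` in `ℚ[[t]]`. -/
theorem sum_even_P_cubed :
    (∀ m : ℕ, {i : ℤ | Even i ∧ PowerSeries.coeff m (P i ^ 3) ≠ 0}.Finite) ∧
    (∀ m : ℕ,
      (∑ᶠ (i : ℤ) (_ : Even i), PowerSeries.coeff m (P i ^ 3)) =
        PowerSeries.coeff m
          ((1 - 3 * PowerSeries.X) * (1 - PowerSeries.X)⁻¹ *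
            ((1 - 4 * PowerSeries.X) ^ 2)⁻¹)) := by
  classical
  constructor
  · intro m
    apply Set.Finite.subset (Set.finite_Icc (-(2 * m : ℤ)) (2 * m))
    rintro i ⟨⟨j, rfl⟩, hne⟩
    rw [show j + j = 2 * j by ring, P_eq_Q] at hne
    have hb : ¬ m < 3 * j.natAbs := fun h => hne (coeff_Q_cube_vanish m j h)
    simp only [Set.mem_Icc]
    omega
  · intro m
    have h1 : ∀ i : ℤ, (∑ᶠ _ : Even i, coeff m (P i ^ 3)) =
        if Even i then coeff m (P i ^ 3) else 0 := fun i => finsum_eq_if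
    rw [finsum_congr h1]
    rw [finsum_eq_sum_of_support_subset _
      (s := (Finset.Icc (-(m : ℤ)) (m : ℤ)).image (fun j => 2 * j)) ?_]
    · rw [Finset.sum_image (fun a _ b _ h => by omega)]
      rw [key_coeff]
      refine Finset.sum_congr rfl fun j _ => ?_
      rw [if_pos ⟨j, by ring⟩, P_eq_Q]
    · intro i hi
      rw [Function.mem_support] at hi
      by_cases he : Even i
      · obtain ⟨j, rfl⟩ := he
        rw [if_pos ⟨j, rfl⟩, show j + j = 2 * j by ring, P_eq_Q] at hi
        have hb : ¬ m < 3 * j.natAbs := fun h => hi (coeff_Q_cube_vanish m j h)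
        simp only [Finset.coe_image, Set.mem_image, Finset.mem_coe, Finset.mem_Icc]
        exact ⟨j, ⟨by omega, by omega⟩, by ring⟩
      · rw [if_neg he] at hi
        exact absurd rfl hi
end

section
/- With w = z_b z_w (1+r_b)(1+r_w), one has in ℚ[[z_b, z_w]] the identity 2·z_b³·z_w²·(1+r_w)³·((1−w)(1−4w)²)^{−1} = 2·r_b³·r_w²·((1+r_b)(1+r_b+r_w)(1+r_b+r_w−3 r_b r_w)²)^{−1}. (This is the rational expression for the series N_{∘∘} of kernel-rooted balanced unicellular maps with both kernel vertices white.) -/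
/-- With `(r_b, r_w)` the unique pair of series in `ℚ[[z_b, z_w]]` with zero constant
coefficient satisfying `r_b = z_b(1+r_w)²` and `r_w = z_w(1+r_b)²`, and
`w = z_b z_w (1+r_b)(1+r_w)`, one has
`2·z_b³·z_w²·(1+r_w)³·((1−w)(1−4w)²)⁻¹
 = 2·r_b³·r_w²·((1+r_b)(1+r_b+r_w)(1+r_b+r_w−3r_br_w)²)⁻¹`
(the rational expression for `N_{∘∘}`). -/
theorem N_white_white_rational :
    ∀ rb rw : MvPowerSeries (Fin 2) ℚ,
      MvPowerSeries.constantCoeff rb = 0 →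
      MvPowerSeries.constantCoeff rw = 0 →
      rb = MvPowerSeries.X 0 * (1 + rw) ^ 2 →
      rw = MvPowerSeries.X 1 * (1 + rb) ^ 2 →
      ∀ w : MvPowerSeries (Fin 2) ℚ,
        w = MvPowerSeries.X 0 * MvPowerSeries.X 1 * (1 + rb) * (1 + rw) →
        2 * MvPowerSeries.X 0 ^ 3 * MvPowerSeries.X 1 ^ 2 * (1 + rw) ^ 3 *
            ((1 - w) * (1 - 4 * w) ^ 2)⁻¹ =
          2 * rb ^ 3 * rw ^ 2 *
            ((1 + rb) * (1 + rb + rw) * (1 + rb + rw - 3 * rb * rw) ^ 2)⁻¹ := by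
  intro rb rw hrb0 hrw0 hrb hrw w hw
  set X0 : MvPowerSeries (Fin 2) ℚ := MvPowerSeries.X 0 with hX0
  set X1 : MvPowerSeries (Fin 2) ℚ := MvPowerSeries.X 1 with hX1
  have hcw : MvPowerSeries.constantCoeff w = 0 := by
    simp [hw, hX0, hX1]
  have hc1 : MvPowerSeries.constantCoeff ((1 - w) * (1 - 4 * w) ^ 2) ≠ 0 := by
    simp [hcw]
  have hc2 : MvPowerSeries.constantCoeff
      ((1 + rb) * (1 + rb + rw) * (1 + rb + rw - 3 * rb * rw) ^ 2) ≠ 0 := by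
    simp [hrb0, hrw0]
  have h3 : rb * rw = X0 * X1 * (1 + rb) ^ 2 * (1 + rw) ^ 2 := by
    linear_combination rw * hrb + X0 * (1 + rw) ^ 2 * hrw
  have hw2 : w * (1 + rb) * (1 + rw) = rb * rw := by
    linear_combination (1 + rb) * (1 + rw) * hw + h3.symm
  have hA : rb ^ 3 * rw ^ 2 = X0 ^ 3 * X1 ^ 2 * (1 + rw) ^ 6 * (1 + rb) ^ 4 := by
    calc rb ^ 3 * rw ^ 2 = (X0 * (1 + rw) ^ 2) ^ 3 * (X1 * (1 + rb) ^ 2) ^ 2 := by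
          rw [← hrb, ← hrw]
      _ = X0 ^ 3 * X1 ^ 2 * (1 + rw) ^ 6 * (1 + rb) ^ 4 := by ring
  have key : 2 * X0 ^ 3 * X1 ^ 2 * (1 + rw) ^ 3 *
        ((1 + rb) * (1 + rb + rw) * (1 + rb + rw - 3 * rb * rw) ^ 2) =
      2 * rb ^ 3 * rw ^ 2 * ((1 - w) * (1 - 4 * w) ^ 2) := by
    have e1 : (1 + rb + rw) = (1 + rb) * (1 + rw) - w * (1 + rb) * (1 + rw) := by
      linear_combination hw2
    have e2 : (1 + rb + rw - 3 * rb * rw)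
        = (1 + rb) * (1 + rw) - 4 * (w * (1 + rb) * (1 + rw)) := by
      linear_combination 4 * hw2
    rw [e2, e1]
    linear_combination -2 * (1 - w) * (1 - 4 * w) ^ 2 * hA
  have h1 : ((1 - w) * (1 - 4 * w) ^ 2) * ((1 - w) * (1 - 4 * w) ^ 2)⁻¹ = 1 :=
    MvPowerSeries.mul_inv_cancel _ hc1
  have h2 : ((1 + rb) * (1 + rb + rw) * (1 + rb + rw - 3 * rb * rw) ^ 2) *
      ((1 + rb) * (1 + rb + rw) * (1 + rb + rw - 3 * rb * rw) ^ 2)⁻¹ = 1 :=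
    MvPowerSeries.mul_inv_cancel _ hc2
  linear_combination (((1 - w) * (1 - 4 * w) ^ 2)⁻¹ *
      ((1 + rb) * (1 + rb + rw) * (1 + rb + rw - 3 * rb * rw) ^ 2)⁻¹) * key +
    (2 * rb ^ 3 * rw ^ 2 *
      ((1 + rb) * (1 + rb + rw) * (1 + rb + rw - 3 * rb * rw) ^ 2)⁻¹) * h1 -
    (2 * X0 ^ 3 * X1 ^ 2 * (1 + rw) ^ 3 * ((1 - w) * (1 - 4 * w) ^ 2)⁻¹) * h2
end

section
/- With w = z_b z_w (1+r_b)(1+r_w), one has in ℚ[[z_b, z_w]] the identity 2·z_w³·z_b²·(1+r_b)³·((1−w)(1−4w)²)^{−1} = 2·r_w³·r_b²·((1+r_w)(1+r_b+r_w)(1+r_b+r_w−3 r_b r_w)²)^{−1}. (This is the rational expression for the series N_{••} of kernel-rooted balanced unicellular maps with both kernel vertices black.) -/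
/-- With `(r_b, r_w)` the unique pair of series in `ℚ[[z_b, z_w]]` with zero constant
coefficient satisfying `r_b = z_b(1+r_w)²` and `r_w = z_w(1+r_b)²`, and
`w = z_b z_w (1+r_b)(1+r_w)`, one has
`2·z_w³·z_b²·(1+r_b)³·((1−w)(1−4w)²)⁻¹
 = 2·r_w³·r_b²·((1+r_w)(1+r_b+r_w)(1+r_b+r_w−3r_br_w)²)⁻¹`
(the rational expression for `N_{••}`). -/
theorem N_black_black_rational :
    ∀ rb rw : MvPowerSeries (Fin 2) ℚ,
      MvPowerSeries.constantCoeff rb = 0 →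
      MvPowerSeries.constantCoeff rw = 0 →
      rb = MvPowerSeries.X 0 * (1 + rw) ^ 2 →
      rw = MvPowerSeries.X 1 * (1 + rb) ^ 2 →
      ∀ w : MvPowerSeries (Fin 2) ℚ,
        w = MvPowerSeries.X 0 * MvPowerSeries.X 1 * (1 + rb) * (1 + rw) →
        2 * MvPowerSeries.X 1 ^ 3 * MvPowerSeries.X 0 ^ 2 * (1 + rb) ^ 3 *
            ((1 - w) * (1 - 4 * w) ^ 2)⁻¹ =
          2 * rw ^ 3 * rb ^ 2 *
            ((1 + rw) * (1 + rb + rw) * (1 + rb + rw - 3 * rb * rw) ^ 2)⁻¹ := by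
  intro rb rw hcb hcw hrb hrw w hw
  set X0 : MvPowerSeries (Fin 2) ℚ := MvPowerSeries.X 0 with hX0
  set X1 : MvPowerSeries (Fin 2) ℚ := MvPowerSeries.X 1 with hX1
  set E : MvPowerSeries (Fin 2) ℚ := (1 + rb) ^ 3 * (1 + rw) ^ 4 with hE
  -- key relation : rb * rw = (1+rb)*(1+rw)*w
  have h : rb * rw = (1 + rb) * (1 + rw) * w := by
    rw [hw]
    linear_combination rw * hrb + (X0 * (1 + rw) ^ 2) * hrw
  -- numerator identity
  have hC : 2 * rw ^ 3 * rb ^ 2 = E * (2 * X1 ^ 3 * X0 ^ 2 * (1 + rb) ^ 3) := by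
    rw [hE]
    linear_combination 2 * rb ^ 2 * (rw ^ 2 + rw * (X1 * (1 + rb) ^ 2)
        + (X1 * (1 + rb) ^ 2) ^ 2) * hrw
      + 2 * (X1 * (1 + rb) ^ 2) ^ 3 * (rb + X0 * (1 + rw) ^ 2) * hrb
  -- denominator identity
  have hD : (1 + rw) * (1 + rb + rw) * (1 + rb + rw - 3 * rb * rw) ^ 2
      = E * ((1 - w) * (1 - 4 * w) ^ 2) := by
    rw [hE]
    linear_combination ((1 + rw) * (-9 * ((1 + rb) * (1 + rw)) ^ 2
      + 24 * ((1 + rb) * (1 + rw)) * (rb * rw + (1 + rb) * (1 + rw) * w)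
      - 16 * ((rb * rw) ^ 2 + rb * rw * (1 + rb) * (1 + rw) * w
        + ((1 + rb) * (1 + rw) * w) ^ 2))) * h
  have hcE : MvPowerSeries.constantCoeff E ≠ 0 := by
    simp [hE, hcb, hcw]
  rw [hC, hD, MvPowerSeries.mul_inv_rev E]
  rw [show E * (2 * X1 ^ 3 * X0 ^ 2 * (1 + rb) ^ 3) * (((1 - w) * (1 - 4 * w) ^ 2)⁻¹ * E⁻¹)
      = 2 * X1 ^ 3 * X0 ^ 2 * (1 + rb) ^ 3 * ((1 - w) * (1 - 4 * w) ^ 2)⁻¹ * (E * E⁻¹) from by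
    ring]
  rw [MvPowerSeries.mul_inv_cancel E hcE, mul_one]
end

section
/- With w = z_b z_w (1+r_b)(1+r_w), one has in ℚ[[z_b, z_w]] the identity z_b·z_w·(1−3w)·((1−w)(1−4w)²)^{−1} = r_b·r_w·(1+r_b+r_w−2 r_b r_w)·((1+r_b+r_w)(1+r_b+r_w−3 r_b r_w)²)^{−1}. (This is the rational expression for the series N_{•∘} of kernel-rooted balanced unicellular maps with one black and one white kernel vertex.) -/
/-- With `(r_b, r_w)` the unique pair of series in `ℚ[[z_b, z_w]]` with zero constant
coefficient satisfying `r_b = z_b(1+r_w)²` and `r_w = z_w(1+r_b)²`, and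
`w = z_b z_w (1+r_b)(1+r_w)`, one has
`z_b·z_w·(1−3w)·((1−w)(1−4w)²)⁻¹
 = r_b·r_w·(1+r_b+r_w−2r_br_w)·((1+r_b+r_w)(1+r_b+r_w−3r_br_w)²)⁻¹`
(the rational expression for `N_{•∘}`). -/
theorem N_black_white_rational :
    ∀ rb rw : MvPowerSeries (Fin 2) ℚ,
      MvPowerSeries.constantCoeff rb = 0 →
      MvPowerSeries.constantCoeff rw = 0 →
      rb = MvPowerSeries.X 0 * (1 + rw) ^ 2 →
      rw = MvPowerSeries.X 1 * (1 + rb) ^ 2 →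
      ∀ w : MvPowerSeries (Fin 2) ℚ,
        w = MvPowerSeries.X 0 * MvPowerSeries.X 1 * (1 + rb) * (1 + rw) →
        MvPowerSeries.X 0 * MvPowerSeries.X 1 * (1 - 3 * w) *
            ((1 - w) * (1 - 4 * w) ^ 2)⁻¹ =
          rb * rw * (1 + rb + rw - 2 * rb * rw) *
            ((1 + rb + rw) * (1 + rb + rw - 3 * rb * rw) ^ 2)⁻¹ := by
  intro rb rw hrb0 hrw0 hb hw w hwdef
  set X0 : MvPowerSeries (Fin 2) ℚ := MvPowerSeries.X 0 with hX0
  set X1 : MvPowerSeries (Fin 2) ℚ := MvPowerSeries.X 1 with hX1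
  -- constant coefficient of w is 0
  have hw0 : MvPowerSeries.constantCoeff w = 0 := by
    rw [hwdef]
    simp [hX0, hX1, MvPowerSeries.constantCoeff_X]
  -- key multiplicative identity: rb * rw = w * (1+rb) * (1+rw)
  have hrr : rb * rw = w * ((1 + rb) * (1 + rw)) := by
    linear_combination rw * hb + (X0 * (1 + rw) ^ 2) * hw
      - ((1 + rb) * (1 + rw)) * hwdef
  have h1 : 1 + rb + rw = (1 - w) * ((1 + rb) * (1 + rw)) := by
    linear_combination -hrr
  have h3 : 1 + rb + rw - 3 * rb * rw = (1 - 4 * w) * ((1 + rb) * (1 + rw)) := by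
    linear_combination -(4 : MvPowerSeries (Fin 2) ℚ) * hrr
  have h4 : 1 + rb + rw - 2 * rb * rw = (1 - 3 * w) * ((1 + rb) * (1 + rw)) := by
    linear_combination -(3 : MvPowerSeries (Fin 2) ℚ) * hrr
  -- invertibility of denominators
  have hD : MvPowerSeries.constantCoeff ((1 - w) * (1 - 4 * w) ^ 2) ≠ 0 := by
    simp [map_mul, map_sub, map_pow, hw0]
  have hE : MvPowerSeries.constantCoeff
      ((1 + rb + rw) * (1 + rb + rw - 3 * rb * rw) ^ 2) ≠ 0 := by
    simp [map_mul, map_sub, map_add, map_pow, hrb0, hrw0]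
  -- cross-multiplied identity
  have key : X0 * X1 * (1 - 3 * w) *
      ((1 + rb + rw) * (1 + rb + rw - 3 * rb * rw) ^ 2) =
      rb * rw * (1 + rb + rw - 2 * rb * rw) * ((1 - w) * (1 - 4 * w) ^ 2) := by
    rw [h4, h3, h1, hrr]
    linear_combination (-(1 - 3 * w) * (1 - w) * (1 - 4 * w) ^ 2 *
      ((1 + rb) * (1 + rw)) ^ 2) * hwdef
  rw [MvPowerSeries.eq_mul_inv_iff_mul_eq hE]
  calc X0 * X1 * (1 - 3 * w) * ((1 - w) * (1 - 4 * w) ^ 2)⁻¹ *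
        ((1 + rb + rw) * (1 + rb + rw - 3 * rb * rw) ^ 2)
      = (X0 * X1 * (1 - 3 * w) *
          ((1 + rb + rw) * (1 + rb + rw - 3 * rb * rw) ^ 2)) *
          ((1 - w) * (1 - 4 * w) ^ 2)⁻¹ := by ring
    _ = (rb * rw * (1 + rb + rw - 2 * rb * rw) * ((1 - w) * (1 - 4 * w) ^ 2)) *
          ((1 - w) * (1 - 4 * w) ^ 2)⁻¹ := by rw [key]
    _ = rb * rw * (1 + rb + rw - 2 * rb * rw) := by
          rw [mul_assoc, MvPowerSeries.mul_inv_cancel _ hD, mul_one]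
end

section
/- With w = z_b z_w (1+r_b)(1+r_w), define N = (2·z_b³·z_w²·(1+r_w)³ + 2·z_w³·z_b²·(1+r_b)³ + 2·z_b·z_w·(1−3w))·((1−w)(1−4w)²)^{−1} in ℚ[[z_b, z_w]]. Then N = 2·r_b·r_w·(1+2r_b+2r_w+r_b r_w+r_b²+r_w²)·((1+r_b)(1+r_w)(1+r_b+r_w)(1+r_b+r_w−3 r_b r_w)²)^{−1}. (N is the generating series of kernel-rooted balanced precubic bipartite unicellular toroidal maps, counted by black and white nodes.) -/
/-- With `(r_b, r_w)` the unique pair of series in `ℚ[[z_b, z_w]]` with zero constant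
coefficient satisfying `r_b = z_b(1+r_w)²` and `r_w = z_w(1+r_b)²`,
`w = z_b z_w (1+r_b)(1+r_w)`, and
`N = (2z_b³z_w²(1+r_w)³ + 2z_w³z_b²(1+r_b)³ + 2z_bz_w(1−3w))·((1−w)(1−4w)²)⁻¹`, one has
`N = 2·r_b·r_w·(1+2r_b+2r_w+r_br_w+r_b²+r_w²)·((1+r_b)(1+r_w)(1+r_b+r_w)(1+r_b+r_w−3r_br_w)²)⁻¹`
(the generating series of kernel-rooted balanced precubic bipartite unicellular
toroidal maps, by black and white nodes). -/
theorem N_rational :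
    ∀ rb rw : MvPowerSeries (Fin 2) ℚ,
      MvPowerSeries.constantCoeff rb = 0 →
      MvPowerSeries.constantCoeff rw = 0 →
      rb = MvPowerSeries.X 0 * (1 + rw) ^ 2 →
      rw = MvPowerSeries.X 1 * (1 + rb) ^ 2 →
      ∀ w N : MvPowerSeries (Fin 2) ℚ,
        w = MvPowerSeries.X 0 * MvPowerSeries.X 1 * (1 + rb) * (1 + rw) →
        N = (2 * MvPowerSeries.X 0 ^ 3 * MvPowerSeries.X 1 ^ 2 * (1 + rw) ^ 3 +
              2 * MvPowerSeries.X 1 ^ 3 * MvPowerSeries.X 0 ^ 2 * (1 + rb) ^ 3 +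
              2 * MvPowerSeries.X 0 * MvPowerSeries.X 1 * (1 - 3 * w)) *
              ((1 - w) * (1 - 4 * w) ^ 2)⁻¹ →
        N = 2 * rb * rw * (1 + 2 * rb + 2 * rw + rb * rw + rb ^ 2 + rw ^ 2) *
              ((1 + rb) * (1 + rw) * (1 + rb + rw) *
                (1 + rb + rw - 3 * rb * rw) ^ 2)⁻¹ := by
  intro rb rw h0b h0w hrb hrw w N hw hN
  subst hw hN
  set X0 : MvPowerSeries (Fin 2) ℚ := MvPowerSeries.X 0 with hX0
  set X1 : MvPowerSeries (Fin 2) ℚ := MvPowerSeries.X 1 with hX1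
  -- shorthand
  set A : MvPowerSeries (Fin 2) ℚ := 1 + rb with hA
  set B : MvPowerSeries (Fin 2) ℚ := 1 + rw with hB
  have ccX0 : MvPowerSeries.constantCoeff X0 = 0 := by
    simp [hX0]
  have ccX1 : MvPowerSeries.constantCoeff X1 = 0 := by
    simp [hX1]
  have ccD : MvPowerSeries.constantCoeff
      ((1 - X0 * X1 * A * B) * (1 - 4 * (X0 * X1 * A * B)) ^ 2) ≠ 0 := by
    simp [ccX0, ccX1]
  have ccE : MvPowerSeries.constantCoeff
      (A * B * (1 + rb + rw) * (1 + rb + rw - 3 * rb * rw) ^ 2) ≠ 0 := by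
    simp [hA, hB, h0b, h0w]
  rw [MvPowerSeries.eq_mul_inv_iff_mul_eq ccE]
  -- key relation : w·A·B = rb·rw
  have hw' : rb * rw = X0 * X1 * A ^ 2 * B ^ 2 := by
    rw [hA, hB]
    linear_combination (X1 * (1 + rb) ^ 2) * hrb + rb * hrw
  have hS : (1 - X0 * X1 * A * B) * (A * B) = 1 + rb + rw := by
    rw [hA, hB]; rw [hA, hB] at hw'
    linear_combination hw'
  have hT : (1 - 4 * (X0 * X1 * A * B)) * (A * B) = 1 + rb + rw - 3 * rb * rw := by
    rw [hA, hB]; rw [hA, hB] at hw'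
    linear_combination 4 * hw'
  have hE : A * B * (1 + rb + rw) * (1 + rb + rw - 3 * rb * rw) ^ 2 =
      ((1 - X0 * X1 * A * B) * (1 - 4 * (X0 * X1 * A * B)) ^ 2) * (A ^ 4 * B ^ 4) := by
    linear_combination (-(A * B) * (1 + rb + rw - 3 * rb * rw) ^ 2) * hS +
      (-(A * B) * ((1 - X0 * X1 * A * B) * (A * B)) *
        ((1 + rb + rw - 3 * rb * rw) + (1 - 4 * (X0 * X1 * A * B)) * (A * B))) * hT
  rw [hE]
  have hcancel : ∀ num F : MvPowerSeries (Fin 2) ℚ,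
      num * ((1 - X0 * X1 * A * B) * (1 - 4 * (X0 * X1 * A * B)) ^ 2)⁻¹ *
        (((1 - X0 * X1 * A * B) * (1 - 4 * (X0 * X1 * A * B)) ^ 2) * F) = num * F := by
    intro num F
    have := MvPowerSeries.inv_mul_cancel _ ccD
    calc num * ((1 - X0 * X1 * A * B) * (1 - 4 * (X0 * X1 * A * B)) ^ 2)⁻¹ *
        (((1 - X0 * X1 * A * B) * (1 - 4 * (X0 * X1 * A * B)) ^ 2) * F)
        = num * F * (((1 - X0 * X1 * A * B) * (1 - 4 * (X0 * X1 * A * B)) ^ 2)⁻¹ *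
          ((1 - X0 * X1 * A * B) * (1 - 4 * (X0 * X1 * A * B)) ^ 2)) := by ring
      _ = num * F := by rw [this, mul_one]
  rw [show (2 * X0 ^ 3 * X1 ^ 2 * B ^ 3 + 2 * X1 ^ 3 * X0 ^ 2 * A ^ 3 +
        2 * X0 * X1 * (1 - 3 * (X0 * X1 * A * B))) *
        ((1 - X0 * X1 * A * B) * (1 - 4 * (X0 * X1 * A * B)) ^ 2)⁻¹ *
        ((1 - X0 * X1 * A * B) * (1 - 4 * (X0 * X1 * A * B)) ^ 2 * (A ^ 4 * B ^ 4)) =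
      (2 * X0 ^ 3 * X1 ^ 2 * B ^ 3 + 2 * X1 ^ 3 * X0 ^ 2 * A ^ 3 +
        2 * X0 * X1 * (1 - 3 * (X0 * X1 * A * B))) * (A ^ 4 * B ^ 4)
    from hcancel _ _]
  -- final polynomial identity
  rw [hA, hB] at *
  linear_combination
    (-(2 * ((X0 * (1 + rw) ^ 2) ^ 2 + (X0 * (1 + rw) ^ 2) * rb + rb ^ 2) *
        (X1 * (1 + rb) ^ 2) ^ 2 * (1 + rw) +
      2 * (X1 * (1 + rb) ^ 2) ^ 3 * ((X0 * (1 + rw) ^ 2) + rb) * (1 + rb) +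
      2 * (X1 * (1 + rb) ^ 2) * (1 + rb) ^ 2 * (1 + rw) ^ 2 -
      6 * (X1 * (1 + rb) ^ 2) ^ 2 * (1 + rb) * (1 + rw) * ((X0 * (1 + rw) ^ 2) + rb))) * hrb +
    (-(2 * rb ^ 3 * ((X1 * (1 + rb) ^ 2) + rw) * (1 + rw) +
      2 * ((X1 * (1 + rb) ^ 2) ^ 2 + (X1 * (1 + rb) ^ 2) * rw + rw ^ 2) * rb ^ 2 * (1 + rb) +
      2 * rb * (1 + rb) ^ 2 * (1 + rw) ^ 2 -
      6 * rb ^ 2 * (1 + rb) * (1 + rw) * ((X1 * (1 + rb) ^ 2) + rw))) * hrw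
end

section
/- With w = z_b z_w (1+r_b)(1+r_w) and N = (2·z_b³·z_w²·(1+r_w)³ + 2·z_w³·z_b²·(1+r_b)³ + 2·z_b·z_w·(1−3w))·((1−w)(1−4w)²)^{−1}, the series T = (1+r_b)·(1+r_w)·N/2 satisfies T = r_b·r_w·(r_b² + r_w² + r_b r_w + 2r_b + 2r_w + 1)·((r_b+r_w+1)(1+r_b+r_w−3 r_b r_w)²)^{−1} = p·(s − p·s^{−1})·(s−3p)^{−2}, where s = 1+r_b+r_w and p = r_b r_w. (This is the algebraic core of the formula for the bivariate generating function of rooted essentially 3-connected toroidal maps, counted by faces via z_b and vertices via z_w.) -/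
/-- With `(r_b, r_w)` the unique pair of series in `ℚ[[z_b, z_w]]` with zero constant
coefficient satisfying `r_b = z_b(1+r_w)²` and `r_w = z_w(1+r_b)²`,
`w = z_b z_w (1+r_b)(1+r_w)`,
`N = (2z_b³z_w²(1+r_w)³ + 2z_w³z_b²(1+r_b)³ + 2z_bz_w(1−3w))·((1−w)(1−4w)²)⁻¹`,
and `T = (1+r_b)(1+r_w)N/2`, one has
`T = r_br_w(r_b²+r_w²+r_br_w+2r_b+2r_w+1)·((r_b+r_w+1)(1+r_b+r_w−3r_br_w)²)⁻¹
   = p(s − p·s⁻¹)(s−3p)⁻²` where `s = 1+r_b+r_w` and `p = r_br_w`. -/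
theorem T_rational :
    ∀ rb rw : MvPowerSeries (Fin 2) ℚ,
      MvPowerSeries.constantCoeff rb = 0 →
      MvPowerSeries.constantCoeff rw = 0 →
      rb = MvPowerSeries.X 0 * (1 + rw) ^ 2 →
      rw = MvPowerSeries.X 1 * (1 + rb) ^ 2 →
      ∀ w N T s p : MvPowerSeries (Fin 2) ℚ,
        w = MvPowerSeries.X 0 * MvPowerSeries.X 1 * (1 + rb) * (1 + rw) →
        N = (2 * MvPowerSeries.X 0 ^ 3 * MvPowerSeries.X 1 ^ 2 * (1 + rw) ^ 3 +
              2 * MvPowerSeries.X 1 ^ 3 * MvPowerSeries.X 0 ^ 2 * (1 + rb) ^ 3 +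
              2 * MvPowerSeries.X 0 * MvPowerSeries.X 1 * (1 - 3 * w)) *
              ((1 - w) * (1 - 4 * w) ^ 2)⁻¹ →
        2 * T = (1 + rb) * (1 + rw) * N →
        s = 1 + rb + rw →
        p = rb * rw →
        T = rb * rw * (rb ^ 2 + rw ^ 2 + rb * rw + 2 * rb + 2 * rw + 1) *
              ((rb + rw + 1) * (1 + rb + rw - 3 * rb * rw) ^ 2)⁻¹ ∧
        T = p * (s - p * s⁻¹) * ((s - 3 * p) ^ 2)⁻¹ := by
  intro rb rw hcb hcw hrb hrw w N T s p hw hN hT hs hp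
  subst hw hN hs hp
  set a : MvPowerSeries (Fin 2) ℚ := MvPowerSeries.X 0 with ha
  set b : MvPowerSeries (Fin 2) ℚ := MvPowerSeries.X 1 with hb
  have hca : MvPowerSeries.constantCoeff a = 0 := MvPowerSeries.constantCoeff_X 0
  have hcb' : MvPowerSeries.constantCoeff b = 0 := MvPowerSeries.constantCoeff_X 1
  -- the big denominator U
  set U : MvPowerSeries (Fin 2) ℚ :=
    (1 - a * b * (1 + rb) * (1 + rw)) * (1 - 4 * (a * b * (1 + rb) * (1 + rw))) ^ 2 with hU
  have hcU : MvPowerSeries.constantCoeff U ≠ 0 := by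
    rw [hU]
    simp [map_sub, map_mul, map_pow, map_one, hca, hcb', hcb, hcw]
  have hcD : MvPowerSeries.constantCoeff
      ((rb + rw + 1) * (1 + rb + rw - 3 * rb * rw) ^ 2) ≠ 0 := by
    simp [map_mul, map_add, map_sub, map_pow, hcb, hcw]
  have hcs : MvPowerSeries.constantCoeff (1 + rb + rw) ≠ 0 := by
    simp [hcb, hcw]
  have hcsp : MvPowerSeries.constantCoeff
      ((1 + rb + rw - 3 * (rb * rw)) ^ 2) ≠ 0 := by
    simp [map_pow, hcb, hcw]
  have h1 : a * (1 + rw) ^ 2 = rb := hrb.symm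
  have h2 : b * (1 + rb) ^ 2 = rw := hrw.symm
  -- product relation
  have hab : a * b * (1 + rb) ^ 2 * (1 + rw) ^ 2 = rb * rw := by
    calc a * b * (1 + rb) ^ 2 * (1 + rw) ^ 2 = (a * (1 + rw) ^ 2) * (b * (1 + rb) ^ 2) := by ring
    _ = rb * rw := by rw [h1, h2]
  -- U times A³B³ equals the target denominator
  have hUD : U * ((1 + rb) ^ 3 * (1 + rw) ^ 3) =
      (rb + rw + 1) * (1 + rb + rw - 3 * rb * rw) ^ 2 := by
    have expand : U * ((1 + rb) ^ 3 * (1 + rw) ^ 3) =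
        ((1 + rb) * (1 + rw) - a * b * (1 + rb) ^ 2 * (1 + rw) ^ 2) *
        ((1 + rb) * (1 + rw) - 4 * (a * b * (1 + rb) ^ 2 * (1 + rw) ^ 2)) ^ 2 := by
      rw [hU]; ring
    rw [expand, hab]; ring
  -- numerator identity
  have t1 : 2 * a ^ 3 * b ^ 2 * (1 + rw) ^ 3 * ((1 + rb) ^ 4 * (1 + rw) ^ 4) =
      2 * rb ^ 3 * rw ^ 2 * (1 + rw) := by
    calc 2 * a ^ 3 * b ^ 2 * (1 + rw) ^ 3 * ((1 + rb) ^ 4 * (1 + rw) ^ 4)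
        = 2 * (a * (1 + rw) ^ 2) ^ 3 * (b * (1 + rb) ^ 2) ^ 2 * (1 + rw) := by ring
    _ = 2 * rb ^ 3 * rw ^ 2 * (1 + rw) := by rw [h1, h2]
  have t2 : 2 * b ^ 3 * a ^ 2 * (1 + rb) ^ 3 * ((1 + rb) ^ 4 * (1 + rw) ^ 4) =
      2 * rw ^ 3 * rb ^ 2 * (1 + rb) := by
    calc 2 * b ^ 3 * a ^ 2 * (1 + rb) ^ 3 * ((1 + rb) ^ 4 * (1 + rw) ^ 4)
        = 2 * (b * (1 + rb) ^ 2) ^ 3 * (a * (1 + rw) ^ 2) ^ 2 * (1 + rb) := by ring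
    _ = 2 * rw ^ 3 * rb ^ 2 * (1 + rb) := by rw [h1, h2]
  have t3 : 2 * a * b * ((1 + rb) ^ 4 * (1 + rw) ^ 4) =
      2 * rb * rw * ((1 + rb) ^ 2 * (1 + rw) ^ 2) := by
    calc 2 * a * b * ((1 + rb) ^ 4 * (1 + rw) ^ 4)
        = 2 * ((a * (1 + rw) ^ 2) * (b * (1 + rb) ^ 2)) * ((1 + rb) ^ 2 * (1 + rw) ^ 2) := by ring
    _ = 2 * rb * rw * ((1 + rb) ^ 2 * (1 + rw) ^ 2) := by rw [h1, h2]; ring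
  have t4 : 6 * a ^ 2 * b ^ 2 * (1 + rb) * (1 + rw) * ((1 + rb) ^ 4 * (1 + rw) ^ 4) =
      6 * rb ^ 2 * rw ^ 2 * ((1 + rb) * (1 + rw)) := by
    calc 6 * a ^ 2 * b ^ 2 * (1 + rb) * (1 + rw) * ((1 + rb) ^ 4 * (1 + rw) ^ 4)
        = 6 * ((a * (1 + rw) ^ 2) * (b * (1 + rb) ^ 2)) ^ 2 * ((1 + rb) * (1 + rw)) := by ring
    _ = 6 * rb ^ 2 * rw ^ 2 * ((1 + rb) * (1 + rw)) := by rw [h1, h2]; ring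
  set Nn : MvPowerSeries (Fin 2) ℚ :=
    2 * a ^ 3 * b ^ 2 * (1 + rw) ^ 3 + 2 * b ^ 3 * a ^ 2 * (1 + rb) ^ 3 +
      2 * a * b * (1 - 3 * (a * b * (1 + rb) * (1 + rw))) with hNn
  have hBig : (1 + rb) * (1 + rw) * Nn * ((1 + rb) ^ 3 * (1 + rw) ^ 3) =
      2 * (rb * rw * (rb ^ 2 + rw ^ 2 + rb * rw + 2 * rb + 2 * rw + 1)) := by
    rw [hNn]
    linear_combination t1 + t2 + t3 - t4
  -- from the definitions: 2 T U = A B Nn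
  have hTU : 2 * T * U = (1 + rb) * (1 + rw) * Nn := by
    calc 2 * T * U = (1 + rb) * (1 + rw) * (Nn * U⁻¹) * U := by rw [hT]
    _ = (1 + rb) * (1 + rw) * Nn * (U⁻¹ * U) := by ring
    _ = (1 + rb) * (1 + rw) * Nn := by rw [MvPowerSeries.inv_mul_cancel U hcU, mul_one]
  have htd2 : 2 * (T * ((rb + rw + 1) * (1 + rb + rw - 3 * rb * rw) ^ 2)) =
      2 * (rb * rw * (rb ^ 2 + rw ^ 2 + rb * rw + 2 * rb + 2 * rw + 1)) := by
    calc 2 * (T * ((rb + rw + 1) * (1 + rb + rw - 3 * rb * rw) ^ 2))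
        = 2 * T * (U * ((1 + rb) ^ 3 * (1 + rw) ^ 3)) := by rw [hUD]; ring
    _ = (2 * T * U) * ((1 + rb) ^ 3 * (1 + rw) ^ 3) := by ring
    _ = (1 + rb) * (1 + rw) * Nn * ((1 + rb) ^ 3 * (1 + rw) ^ 3) := by rw [hTU]
    _ = 2 * (rb * rw * (rb ^ 2 + rw ^ 2 + rb * rw + 2 * rb + 2 * rw + 1)) := hBig
  have h2nzd : (2 : MvPowerSeries (Fin 2) ℚ) ∈ nonZeroDivisors (MvPowerSeries (Fin 2) ℚ) := by
    apply MvPowerSeries.mem_nonZeroDivisors_of_constantCoeff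
    rw [map_ofNat]
    exact mem_nonZeroDivisors_of_ne_zero two_ne_zero
  have htd : T * ((rb + rw + 1) * (1 + rb + rw - 3 * rb * rw) ^ 2) =
      rb * rw * (rb ^ 2 + rw ^ 2 + rb * rw + 2 * rb + 2 * rw + 1) :=
    (mul_cancel_left_mem_nonZeroDivisors h2nzd).mp htd2
  constructor
  · rw [MvPowerSeries.eq_mul_inv_iff_mul_eq hcD]
    exact htd
  · rw [MvPowerSeries.eq_mul_inv_iff_mul_eq hcsp]
    have hss : (1 + rb + rw) * (1 + rb + rw)⁻¹ = 1 :=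
      MvPowerSeries.mul_inv_cancel _ hcs
    have h6 : rb * rw * ((1 + rb + rw) - rb * rw * (1 + rb + rw)⁻¹) =
        (rb * rw * ((1 + rb + rw) ^ 2 - rb * rw)) * (1 + rb + rw)⁻¹ := by
      linear_combination (-(rb * rw * (1 + rb + rw))) * hss
    rw [h6, MvPowerSeries.eq_mul_inv_iff_mul_eq hcs]
    linear_combination htd
end

section
/- There is a unique formal power series ρ ∈ ℚ[[z]] with constant coefficient 0 satisfying ρ = z·(2 + 2ρ + ρ²)², and substituting r_b = (1+ρ)² and r_w = ρ into the expression r_b·r_w·(r_b² + r_w² + r_b r_w + 2r_b + 2r_w + 1)·((r_b+r_w+1)(1+r_b+r_w−3 r_b r_w)²)^{−1} yields ρ·(ρ+1)·(ρ²+3ρ+4)·((3ρ²+2ρ−2)²(ρ+2))^{−1} in ℚ[[z]]. (This is the vertex-count specialization T_v(z) = T(1,z) of the generating function of rooted essentially 3-connected toroidal maps.) -/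
open PowerSeries

noncomputable section

private def Faux (a : PowerSeries ℚ) : PowerSeries ℚ := (2 + 2*a + a^2)^2

private def Gaux (a b : PowerSeries ℚ) : PowerSeries ℚ :=
  (2 + a + b) * ((2 + 2*a + a^2) + (2 + 2*b + b^2))

private lemma Faux_sub (a b : PowerSeries ℚ) :
    Faux a - Faux b = (a - b) * Gaux a b := by
  unfold Faux Gaux; ring

private def seqAux : ℕ → PowerSeries ℚ
  | 0 => 0
  | n+1 => X * Faux (seqAux n)

private lemma seqAux_dvd (n : ℕ) : (X : PowerSeries ℚ)^(n+1) ∣ seqAux (n+1) - seqAux n := by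
  induction n with
  | zero =>
      simp only [seqAux, sub_zero, zero_add, pow_one]
      exact dvd_mul_right X (Faux 0)
  | succ n ih =>
      have h : seqAux (n+2) - seqAux (n+1)
          = X * ((seqAux (n+1) - seqAux n) * Gaux (seqAux (n+1)) (seqAux n)) := by
        show X * Faux (seqAux (n+1)) - X * Faux (seqAux n) = _
        rw [← mul_sub, Faux_sub]
      rw [h, pow_succ']
      exact mul_dvd_mul_left X (ih.mul_right _)

private def rhoAux : PowerSeries ℚ := PowerSeries.mk fun k => coeff k (seqAux (k+1))

private lemma coeff_seqAux_stable (k m : ℕ) (hm : k < m) :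
    coeff k (seqAux m) = coeff k rhoAux := by
  induction m with
  | zero => omega
  | succ m ih =>
      rcases Nat.lt_or_ge k m with h | h
      · have := (X_pow_dvd_iff.mp (seqAux_dvd m)) k (by omega)
        rw [map_sub] at this
        rw [← ih h]
        linarith [this]
      · have : k = m := by omega
        subst this
        simp [rhoAux, coeff_mk]

private lemma rhoAux_sub_dvd (n : ℕ) : (X : PowerSeries ℚ)^n ∣ rhoAux - seqAux n := by
  rw [X_pow_dvd_iff]
  intro m hm
  rw [map_sub, coeff_seqAux_stable m n hm, sub_self]

private lemma rhoAux_fixed : rhoAux = X * Faux rhoAux := by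
  have key : ∀ k : ℕ, coeff k (rhoAux - X * Faux rhoAux) = 0 := by
    intro k
    have h1 : (X : PowerSeries ℚ)^(k+1) ∣ rhoAux - seqAux (k+1) := rhoAux_sub_dvd (k+1)
    have h2 : (X : PowerSeries ℚ)^(k+1) ∣ X * Faux (seqAux k) - X * Faux rhoAux := by
      rw [← mul_sub, Faux_sub, pow_succ']
      exact mul_dvd_mul_left X ((dvd_sub_comm.mp (rhoAux_sub_dvd k)).mul_right _)
    have h3 : rhoAux - X * Faux rhoAux
        = (rhoAux - seqAux (k+1)) + (X * Faux (seqAux k) - X * Faux rhoAux) := by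
      show rhoAux - X * Faux rhoAux = (rhoAux - X * Faux (seqAux k)) + _
      ring
    have := X_pow_dvd_iff.mp (show (X : PowerSeries ℚ)^(k+1) ∣ rhoAux - X * Faux rhoAux by rw [h3]; exact h1.add h2) k (by omega)
    exact this
  ext k
  have := key k
  rw [map_sub] at this
  linarith [this]

private lemma rhoAux_const : constantCoeff rhoAux = 0 := by
  rw [rhoAux_fixed]
  simp

set_option maxHeartbeats 1000000 in
private lemma part2 (ρ : PowerSeries ℚ) (hc : PowerSeries.constantCoeff ρ = 0) :
    (1 + ρ) ^ 2 * ρ * (((1 + ρ) ^ 2) ^ 2 + ρ ^ 2 + (1 + ρ) ^ 2 * ρ + 2 * (1 + ρ) ^ 2 + 2 * ρ + 1) *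
        (((1 + ρ) ^ 2 + ρ + 1) * (1 + (1 + ρ) ^ 2 + ρ - 3 * (1 + ρ) ^ 2 * ρ) ^ 2)⁻¹ =
      ρ * (ρ + 1) * (ρ ^ 2 + 3 * ρ + 4) * ((3 * ρ ^ 2 + 2 * ρ - 2) ^ 2 * (ρ + 2))⁻¹ := by
  set D1 : PowerSeries ℚ := ((1 + ρ)^2 + ρ + 1) * (1 + (1 + ρ)^2 + ρ - 3 * (1 + ρ)^2 * ρ)^2 with hD1def
  set D2 : PowerSeries ℚ := (3 * ρ^2 + 2 * ρ - 2)^2 * (ρ + 2) with hD2def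
  have hD1 : PowerSeries.constantCoeff D1 ≠ 0 := by
    simp only [hD1def, map_mul, map_add, map_sub, map_pow, map_one, map_ofNat, hc]
    norm_num
  have hD2 : PowerSeries.constantCoeff D2 ≠ 0 := by
    simp only [hD2def, map_mul, map_add, map_sub, map_pow, map_one, map_ofNat, hc]
    norm_num
  have hD1ne : D1 ≠ 0 := fun h => hD1 (by rw [h, map_zero])
  have hD2ne : D2 ≠ 0 := fun h => hD2 (by rw [h, map_zero])
  apply mul_right_cancel₀ (mul_ne_zero hD1ne hD2ne)
  have e1 : D1⁻¹ * D1 = 1 := PowerSeries.inv_mul_cancel D1 hD1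
  have e2 : D2⁻¹ * D2 = 1 := PowerSeries.inv_mul_cancel D2 hD2
  calc (1 + ρ)^2 * ρ * (((1 + ρ)^2)^2 + ρ^2 + (1 + ρ)^2 * ρ + 2 * (1 + ρ)^2 + 2 * ρ + 1) * D1⁻¹ * (D1 * D2)
      = (1 + ρ)^2 * ρ * (((1 + ρ)^2)^2 + ρ^2 + (1 + ρ)^2 * ρ + 2 * (1 + ρ)^2 + 2 * ρ + 1) * D2 * (D1⁻¹ * D1) := by ring
    _ = (1 + ρ)^2 * ρ * (((1 + ρ)^2)^2 + ρ^2 + (1 + ρ)^2 * ρ + 2 * (1 + ρ)^2 + 2 * ρ + 1) * D2 := by rw [e1, mul_one]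
    _ = ρ * (ρ + 1) * (ρ^2 + 3*ρ + 4) * D1 := by rw [hD1def, hD2def]; ring
    _ = ρ * (ρ + 1) * (ρ^2 + 3*ρ + 4) * (D2⁻¹ * D2) * D1 := by rw [e2, mul_one]
    _ = ρ * (ρ + 1) * (ρ^2 + 3*ρ + 4) * D2⁻¹ * (D1 * D2) := by ring

/-- There is a unique `ρ ∈ ℚ[[z]]` with zero constant coefficient satisfying
`ρ = z(2+2ρ+ρ²)²`, and substituting `r_b = (1+ρ)²`, `r_w = ρ` into
`r_br_w(r_b²+r_w²+r_br_w+2r_b+2r_w+1)·((r_b+r_w+1)(1+r_b+r_w−3r_br_w)²)⁻¹`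
yields `ρ(ρ+1)(ρ²+3ρ+4)·((3ρ²+2ρ−2)²(ρ+2))⁻¹` in `ℚ[[z]]`
(the vertex-count specialization `T_v(z) = T(1,z)`). -/
theorem T_vertex_specialization :
    (∃! ρ : PowerSeries ℚ,
      PowerSeries.constantCoeff ρ = 0 ∧
        ρ = PowerSeries.X * (2 + 2 * ρ + ρ ^ 2) ^ 2) ∧
    ∀ ρ : PowerSeries ℚ,
      PowerSeries.constantCoeff ρ = 0 →
      ρ = PowerSeries.X * (2 + 2 * ρ + ρ ^ 2) ^ 2 →
      ∀ rb rw : PowerSeries ℚ, rb = (1 + ρ) ^ 2 → rw = ρ →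
        rb * rw * (rb ^ 2 + rw ^ 2 + rb * rw + 2 * rb + 2 * rw + 1) *
            ((rb + rw + 1) * (1 + rb + rw - 3 * rb * rw) ^ 2)⁻¹ =
          ρ * (ρ + 1) * (ρ ^ 2 + 3 * ρ + 4) *
            ((3 * ρ ^ 2 + 2 * ρ - 2) ^ 2 * (ρ + 2))⁻¹ := by
  constructor
  · refine ⟨rhoAux, ⟨rhoAux_const, by simpa [Faux] using rhoAux_fixed⟩, ?_⟩
    rintro ρ ⟨hc, hfix⟩
    have h2 : rhoAux = X * Faux rhoAux := rhoAux_fixed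
    have h1 : ρ = X * Faux ρ := by simpa [Faux] using hfix
    have hsub : ρ - rhoAux = X * ((ρ - rhoAux) * Gaux ρ rhoAux) := by
      conv_lhs => rw [h1, h2]
      rw [← mul_sub, Faux_sub]
    have hz : (ρ - rhoAux) * (1 - X * Gaux ρ rhoAux) = 0 := by
      linear_combination hsub
    have hne : (1 - X * Gaux ρ rhoAux : PowerSeries ℚ) ≠ 0 := by
      intro h
      have : constantCoeff (1 - X * Gaux ρ rhoAux) = 1 := by simp
      rw [h, map_zero] at this
      exact one_ne_zero this.symm
    have := mul_eq_zero.mp hz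
    rcases this with h | h
    · exact sub_eq_zero.mp h
    · exact absurd h hne
  · rintro ρ hc _ rb rw hrb hrw
    subst hrb; subst hrw
    exact part2 _ hc

end
end
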